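/- Let A, B ∈ ℝ^{m×n} both have full rank min{m,n}. Then ‖A⁺ − B⁺‖₂ ≤ α‖A⁺‖₂‖B⁺‖₂‖A − B‖₂, where α = √2 if m ≠ n and α = 1 if m = n, and A⁺ denotes the Moore–Penrose pseudoinverse. -/

import Mathlib

open Matrix Kronecker
open scoped Matrix.Norms.L2Operator

/-- Spectral (operator 2-) norm of a real matrix. -/
noncomputable def spec {m n : Type*} [Fintype m] [Fintype n] [DecidableEq n]
    (A : Matrix m n ℝ) : ℝ :=
  ‖LinearMap.toContinuousLinearMap (Matrix.toEuclideanLin A)‖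

/-- Frobenius norm of a real matrix. -/
noncomputable def frob {m n : Type*} [Fintype m] [Fintype n] (A : Matrix m n ℝ) : ℝ :=
  Real.sqrt (∑ i, ∑ j, (A i j) ^ 2)

/-- `B` is the Moore–Penrose pseudoinverse of `A` (the four Penrose equations, real case). -/
def IsPinv {m n : Type*} [Fintype m] [Fintype n]
    (A : Matrix m n ℝ) (B : Matrix n m ℝ) : Prop :=
  A * B * A = A ∧ B * A * B = B ∧ (A * B)ᵀ = A * B ∧ (B * A)ᵀ = B * A

/-- Khatri–Rao (column-wise Kronecker) product. -/
def khatriRao {p q K : Type*} (A : Matrix p K ℝ) (B : Matrix q K ℝ) :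
    Matrix (p × q) K ℝ :=
  Matrix.of fun ij k => A ij.1 k * B ij.2 k

/-- The `j`-th largest singular value of a real matrix (singular values sorted
descending, i.e. square roots of the eigenvalues of `AᵀA`). -/
noncomputable def singVal {n K : ℕ} (A : Matrix (Fin n) (Fin K) ℝ) (j : Fin K) : ℝ :=
  (Multiset.sort (r := (· ≥ ·)) (Finset.univ.val.map fun i =>
    Real.sqrt ((show (Aᵀ * A).IsHermitian from Matrix.isHermitian_conjTranspose_mul_self A).eigenvalues i))).getD j 0

/-- Smallest singular value of a real matrix. -/
noncomputable def sigmaMin {m n : Type*} [Fintype m] [Fintype n] [DecidableEq n]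
    (A : Matrix m n ℝ) : ℝ :=
  Real.sqrt (⨅ j, (show (Aᵀ * A).IsHermitian from Matrix.isHermitian_conjTranspose_mul_self A).eigenvalues j)

/-- Smallest nonzero singular value of a real matrix. -/
noncomputable def sigmaMinPos {m n : Type*} [Fintype m] [Fintype n] [DecidableEq n]
    (A : Matrix m n ℝ) : ℝ :=
  sInf {s : ℝ | s ≠ 0 ∧
    ∃ i, s = Real.sqrt ((show (Aᵀ * A).IsHermitian from Matrix.isHermitian_conjTranspose_mul_self A).eigenvalues i)}

/-!
If `B` has full row rank then `B * B⁺ = 1`, and `A⁺ - B⁺` splits as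
`A⁺ (B - A) B⁺ + (1 - A⁺A)(A - B)ᵀ B⁺ᵀ B⁺`. The two terms have orthogonal column spaces,
since `A⁺ᵀ (1 - A⁺A) = 0`, so the square of the spectral norm of the sum is at most the sum of
the squares. The first term is bounded by `‖A⁺‖ ‖B⁺‖ ‖A - B‖`, the second by `‖B⁺‖² ‖A - B‖`
because `1 - A⁺A` is an orthogonal projection; choosing the labels so that `‖B⁺‖ ≤ ‖A⁺‖`
gives the factor `√2`. Full column rank reduces to this by transposition, and in the square
case `A⁺A = 1` kills the second term, leaving the factor `1`.
-/

lemma spec_eq_l2_opNorm {m n : Type*} [Fintype m] [Fintype n] [DecidableEq n]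
    (A : Matrix m n ℝ) : spec A = ‖A‖ := rfl

section L2OpNorm

variable {m n : Type*} [Fintype m] [Fintype n] [DecidableEq n]

lemma l2_opNorm_transpose [DecidableEq m] (A : Matrix m n ℝ) : ‖Aᵀ‖ = ‖A‖ :=
  l2_opNorm_conjTranspose A

lemma l2_opNorm_transpose_mul_self (A : Matrix m n ℝ) : ‖Aᵀ * A‖ = ‖A‖ * ‖A‖ :=
  l2_opNorm_conjTranspose_mul_self A

lemma l2_opNorm_le_one_of_transpose_eq_of_mul_self_eq (P : Matrix n n ℝ) (hsymm : Pᵀ = P)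
    (hidem : P * P = P) : ‖P‖ ≤ 1 := by
  have h : ‖P‖ * ‖P‖ = ‖P‖ := by rw [← l2_opNorm_transpose_mul_self, hsymm, hidem]
  nlinarith [norm_nonneg P]

lemma l2_opNorm_add_sq_le_of_transpose_mul_eq_zero {X Y : Matrix m n ℝ} (h : Xᵀ * Y = 0) :
    ‖X + Y‖ ^ 2 ≤ ‖X‖ ^ 2 + ‖Y‖ ^ 2 := by
  have h' : Yᵀ * X = 0 := by
    simpa only [transpose_mul, transpose_transpose, transpose_zero] using congrArg transpose h
  have hgram : (X + Y)ᵀ * (X + Y) = Xᵀ * X + Yᵀ * Y := by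
    simp only [transpose_add, Matrix.add_mul, Matrix.mul_add, h, h', add_zero, zero_add]
  calc ‖X + Y‖ ^ 2 = ‖Xᵀ * X + Yᵀ * Y‖ := by rw [sq, ← l2_opNorm_transpose_mul_self, hgram]
    _ ≤ ‖Xᵀ * X‖ + ‖Yᵀ * Y‖ := norm_add_le _ _
    _ = ‖X‖ ^ 2 + ‖Y‖ ^ 2 := by simp only [l2_opNorm_transpose_mul_self, sq]

end L2OpNorm

lemma Matrix.mulVec_surjective_of_rank_eq_card {m n K : Type*} [Fintype m] [Fintype n] [Field K]
    {B : Matrix m n K} (h : B.rank = Fintype.card m) : Function.Surjective B.mulVec := by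
  have hrange : LinearMap.range B.mulVecLin = ⊤ :=
    Submodule.eq_top_of_finrank_eq (by rw [← rank, h, Module.finrank_fintype_fun_eq_card])
  exact LinearMap.range_eq_top.mp hrange

namespace IsPinv

variable {m n : Type*} [Fintype m] [Fintype n] {A B : Matrix m n ℝ} {Apinv Bpinv : Matrix n m ℝ}

lemma transpose (h : IsPinv A Apinv) : IsPinv Aᵀ Apinvᵀ := by
  obtain ⟨h₁, h₂, h₃, h₄⟩ := h
  refine ⟨?_, ?_, ?_, ?_⟩
  · rw [← transpose_mul, ← transpose_mul, ← Matrix.mul_assoc, h₁]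
  · rw [← transpose_mul, ← transpose_mul, ← Matrix.mul_assoc, h₂]
  · rw [← transpose_mul, transpose_transpose, h₄]
  · rw [← transpose_mul, transpose_transpose, h₃]

lemma mul_pinv_eq_one_of_rank_eq_card [DecidableEq m] (h : IsPinv B Bpinv)
    (hB : B.rank = Fintype.card m) : B * Bpinv = 1 := by
  obtain ⟨R, hR⟩ :=
    mulVec_surjective_iff_exists_right_inverse.mp (mulVec_surjective_of_rank_eq_card hB)
  calc B * Bpinv = B * Bpinv * (B * R) := by rw [hR, Matrix.mul_one]
    _ = 1 := by rw [← Matrix.mul_assoc, h.1, hR]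

lemma pinv_mul_eq_one_of_rank_eq_card [DecidableEq n] (h : IsPinv A Apinv)
    (hA : A.rank = Fintype.card n) : Apinv * A = 1 := by
  have := h.transpose.mul_pinv_eq_one_of_rank_eq_card (by rwa [rank_transpose])
  rwa [← transpose_mul, ← transpose_one, transpose_inj] at this

lemma transpose_mul_one_sub_pinv_mul_eq_zero [DecidableEq n] (h : IsPinv A Apinv) :
    Apinvᵀ * (1 - Apinv * A) = 0 := by
  rw [Matrix.mul_sub, Matrix.mul_one, ← h.2.2.2, ← transpose_mul, h.2.1, sub_self]

lemma one_sub_pinv_mul_mul_transpose_eq_zero [DecidableEq n] (h : IsPinv A Apinv) :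
    (1 - Apinv * A) * Aᵀ = 0 := by
  rw [Matrix.sub_mul, Matrix.one_mul, ← h.2.2.2, ← transpose_mul, ← Matrix.mul_assoc, h.1,
    sub_self]

lemma l2_opNorm_one_sub_pinv_mul_le_one [DecidableEq n] (h : IsPinv A Apinv) :
    ‖1 - Apinv * A‖ ≤ 1 := by
  apply l2_opNorm_le_one_of_transpose_eq_of_mul_self_eq
  · rw [transpose_sub, transpose_one, h.2.2.2]
  · have hidem : Apinv * A * (Apinv * A) = Apinv * A := by rw [← Matrix.mul_assoc, h.2.1]
    simp only [Matrix.sub_mul, Matrix.mul_sub, Matrix.mul_one, Matrix.one_mul, hidem]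
    abel

lemma transpose_mul_transpose_pinv_mul_pinv (h : IsPinv B Bpinv) :
    Bᵀ * (Bpinvᵀ * Bpinv) = Bpinv := by
  rw [← Matrix.mul_assoc, ← transpose_mul, h.2.2.2, h.2.1]

lemma pinv_sub_pinv_eq_of_mul_pinv_eq_one [DecidableEq m] [DecidableEq n] (hA : IsPinv A Apinv)
    (hB : IsPinv B Bpinv) (hBB : B * Bpinv = 1) :
    Apinv - Bpinv =
      Apinv * (B - A) * Bpinv + (1 - Apinv * A) * (A - B)ᵀ * (Bpinvᵀ * Bpinv) := by
  rw [transpose_sub, Matrix.mul_sub (1 - Apinv * A), hA.one_sub_pinv_mul_mul_transpose_eq_zero,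
    zero_sub, Matrix.neg_mul, Matrix.mul_assoc _ Bᵀ, hB.transpose_mul_transpose_pinv_mul_pinv,
    Matrix.mul_sub, Matrix.sub_mul, Matrix.mul_assoc Apinv B, hBB, Matrix.mul_one, Matrix.sub_mul,
    Matrix.one_mul]
  abel

end IsPinv

section Perturbation

variable {m n : Type*} [Fintype m] [Fintype n] [DecidableEq m] [DecidableEq n]

lemma l2_opNorm_mul_sub_mul_le {k l : Type*} [Fintype k] [Fintype l] [DecidableEq l]
    (P : Matrix k m ℝ) (A B : Matrix m n ℝ) (Q : Matrix n l ℝ) :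
    ‖P * (B - A) * Q‖ ≤ ‖P‖ * ‖Q‖ * ‖A - B‖ :=
  calc ‖P * (B - A) * Q‖ ≤ ‖P‖ * ‖B - A‖ * ‖Q‖ :=
        (l2_opNorm_mul _ _).trans (mul_le_mul_of_nonneg_right (l2_opNorm_mul _ _) (norm_nonneg _))
    _ = ‖P‖ * ‖Q‖ * ‖A - B‖ := by rw [norm_sub_rev]; ring

lemma l2_opNorm_sub_le_of_mul_eq_one {A B : Matrix m n ℝ} {P Q : Matrix n m ℝ}
    (hPA : P * A = 1) (hBQ : B * Q = 1) : ‖P - Q‖ ≤ ‖P‖ * ‖Q‖ * ‖A - B‖ := by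
  have hdecomp : P - Q = P * (B - A) * Q := by
    rw [Matrix.mul_sub, Matrix.sub_mul, Matrix.mul_assoc, hBQ, Matrix.mul_one, hPA,
      Matrix.one_mul]
  rw [hdecomp]
  exact l2_opNorm_mul_sub_mul_le P A B Q

variable {A B : Matrix m n ℝ} {Apinv Bpinv : Matrix n m ℝ}

lemma IsPinv.l2_opNorm_sub_le_of_mul_pinv_eq_one_of_le (hA : IsPinv A Apinv)
    (hB : IsPinv B Bpinv) (hBB : B * Bpinv = 1) (hle : ‖Bpinv‖ ≤ ‖Apinv‖) :
    ‖Apinv - Bpinv‖ ≤ √2 * ‖Apinv‖ * ‖Bpinv‖ * ‖A - B‖ := by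
  set X := Apinv * (B - A) * Bpinv
  set Y := (1 - Apinv * A) * (A - B)ᵀ * (Bpinvᵀ * Bpinv)
  have horth : Xᵀ * Y = 0 := by
    simp only [X, Y, transpose_mul, Matrix.mul_assoc]
    rw [← Matrix.mul_assoc Apinvᵀ, hA.transpose_mul_one_sub_pinv_mul_eq_zero, Matrix.zero_mul,
      Matrix.mul_zero, Matrix.mul_zero]
  have hX : ‖X‖ ≤ ‖Apinv‖ * ‖Bpinv‖ * ‖A - B‖ := l2_opNorm_mul_sub_mul_le _ _ _ _
  have hY : ‖Y‖ ≤ ‖Apinv‖ * ‖Bpinv‖ * ‖A - B‖ :=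
    calc ‖Y‖ ≤ ‖1 - Apinv * A‖ * ‖(A - B)ᵀ‖ * ‖Bpinvᵀ * Bpinv‖ :=
          (l2_opNorm_mul _ _).trans
            (mul_le_mul_of_nonneg_right (l2_opNorm_mul _ _) (norm_nonneg _))
      _ ≤ 1 * ‖A - B‖ * (‖Apinv‖ * ‖Bpinv‖) := by
          rw [l2_opNorm_transpose, l2_opNorm_transpose_mul_self]
          gcongr
          exact hA.l2_opNorm_one_sub_pinv_mul_le_one
      _ = ‖Apinv‖ * ‖Bpinv‖ * ‖A - B‖ := by ring
  calc ‖Apinv - Bpinv‖ = √(‖X + Y‖ ^ 2) := by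
        rw [hA.pinv_sub_pinv_eq_of_mul_pinv_eq_one hB hBB, Real.sqrt_sq (norm_nonneg _)]
    _ ≤ √((‖Apinv‖ * ‖Bpinv‖ * ‖A - B‖) ^ 2 + (‖Apinv‖ * ‖Bpinv‖ * ‖A - B‖) ^ 2) :=
        Real.sqrt_le_sqrt ((l2_opNorm_add_sq_le_of_transpose_mul_eq_zero horth).trans
          (by gcongr))
    _ = √2 * ‖Apinv‖ * ‖Bpinv‖ * ‖A - B‖ := by
        rw [← two_mul, Real.sqrt_mul zero_le_two, Real.sqrt_sq (by positivity)]
        ring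

lemma IsPinv.l2_opNorm_sub_le_of_rank_eq_card (hA : IsPinv A Apinv) (hB : IsPinv B Bpinv)
    (hAr : A.rank = Fintype.card m) (hBr : B.rank = Fintype.card m) :
    ‖Apinv - Bpinv‖ ≤ √2 * ‖Apinv‖ * ‖Bpinv‖ * ‖A - B‖ := by
  rcases le_total ‖Bpinv‖ ‖Apinv‖ with hle | hle
  · exact hA.l2_opNorm_sub_le_of_mul_pinv_eq_one_of_le hB
      (hB.mul_pinv_eq_one_of_rank_eq_card hBr) hle
  · have h := hB.l2_opNorm_sub_le_of_mul_pinv_eq_one_of_le hA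
      (hA.mul_pinv_eq_one_of_rank_eq_card hAr) hle
    rw [norm_sub_rev, norm_sub_rev B] at h
    exact h.trans_eq (by ring)

end Perturbation

/-- Wedin's pseudoinverse perturbation theorem for full-rank real matrices. -/
theorem wedin_pinv_perturbation {m n : ℕ} (A B : Matrix (Fin m) (Fin n) ℝ)
    (Apinv Bpinv : Matrix (Fin n) (Fin m) ℝ)
    (hA : A.rank = min m n) (hB : B.rank = min m n)
    (hAp : IsPinv A Apinv) (hBp : IsPinv B Bpinv) :
    spec (Apinv - Bpinv) ≤
      (if m = n then 1 else Real.sqrt 2) * spec Apinv * spec Bpinv * spec (A - B) := by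
  simp only [spec_eq_l2_opNorm]
  rcases lt_trichotomy m n with hlt | rfl | hgt
  · have hcard : min m n = Fintype.card (Fin m) := by rw [min_eq_left hlt.le, Fintype.card_fin]
    rw [if_neg hlt.ne]
    exact hAp.l2_opNorm_sub_le_of_rank_eq_card hBp (hA.trans hcard) (hB.trans hcard)
  · have hcard : min m m = Fintype.card (Fin m) := by rw [min_self, Fintype.card_fin]
    rw [if_pos rfl, one_mul]
    exact l2_opNorm_sub_le_of_mul_eq_one (hAp.pinv_mul_eq_one_of_rank_eq_card (hA.trans hcard))
      (hBp.mul_pinv_eq_one_of_rank_eq_card (hB.trans hcard))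
  · have hcard : min m n = Fintype.card (Fin n) := by rw [min_eq_right hgt.le, Fintype.card_fin]
    rw [if_neg hgt.ne']
    have h := hAp.transpose.l2_opNorm_sub_le_of_rank_eq_card hBp.transpose
      (by rw [rank_transpose, hA, hcard]) (by rw [rank_transpose, hB, hcard])
    simpa only [← transpose_sub, l2_opNorm_transpose] using h
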